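/- arXiv:1905.00857 — 6 statements merged into one kernel-verified Lean document; each statement's English description precedes it below -/
import Mathlib

section
/- Let Φ be a unital completely positive map on the algebra of n×n complex matrices given in Kraus form Φ(A) = Σ_k V_k* A V_k with Σ_k V_k* V_k = I. If A is a matrix satisfying Φ(A) = A, Φ(A*A) = A*A and Φ(AA*) = AA*, then A commutes with every V_k and with every V_k*. -/
/-!
For a Kraus map `Φ x = ∑ₖ Vₖ* x Vₖ` one has the identity
`∑ₖ [x, Vₖ]* [x, Vₖ] = Φ(x* x) - Φ(x*) x - x* Φ(x) + x* Φ(1) x`.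
If `Φ` is unital and fixes both `x` and `x* x`, the right-hand side vanishes, so a sum of
positive semidefinite matrices is zero and every commutator `[x, Vₖ]` is zero. Applied to `A`
this gives `A Vₖ = Vₖ A`; applied to `A*`, whose hypothesis is `Φ(A A*) = A A*`, it gives
`A* Vₖ = Vₖ A*`, the adjoint of `A Vₖ* = Vₖ* A`.
-/

open Matrix

section Kraus

variable {ι R : Type*} [Fintype ι] [Ring R] [StarRing R]

def krausMap (V : ι → R) (x : R) : R := ∑ k, star (V k) * x * V k

theorem krausMap_star (V : ι → R) (x : R) : krausMap V (star x) = star (krausMap V x) := by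
  simp only [krausMap, star_sum, star_mul, star_star, mul_assoc]

theorem sum_star_commutator_mul_commutator (V : ι → R) (x : R) :
    ∑ k, star (x * V k - V k * x) * (x * V k - V k * x) =
      krausMap V (star x * x) - krausMap V (star x) * x - star x * krausMap V x
        + star x * krausMap V 1 * x := by
  simp only [krausMap, Finset.sum_mul, Finset.mul_sum, ← Finset.sum_sub_distrib,
    ← Finset.sum_add_distrib, star_sub, star_mul]
  refine Finset.sum_congr rfl fun k _ => ?_
  noncomm_ring

end Kraus

namespace Matrix

variable {ι m n R : Type*} [Fintype m] [Fintype n]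
  [CommRing R] [PartialOrder R] [StarRing R] [StarOrderedRing R] [NoZeroDivisors R]

theorem sum_conjTranspose_mul_self_eq_zero_iff {s : Finset ι} {D : ι → Matrix m n R} :
    ∑ i ∈ s, (D i)ᴴ * D i = 0 ↔ ∀ i ∈ s, D i = 0 := by
  refine ⟨fun h => ?_, fun h => Finset.sum_eq_zero fun i hi => by simp [h i hi]⟩
  have htrace : ∑ i ∈ s, ((D i)ᴴ * D i).trace = 0 := by rw [← trace_sum, h, trace_zero]
  rw [Finset.sum_eq_zero_iff_of_nonneg
    fun i _ => (posSemidef_conjTranspose_mul_self _).trace_nonneg] at htrace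
  exact fun i hi => trace_conjTranspose_mul_self_eq_zero_iff.mp (htrace i hi)

theorem commute_of_krausMap_eq_self [Fintype ι] [DecidableEq n] {V : ι → Matrix n n R}
    (hV : krausMap V 1 = 1) {B : Matrix n n R} (hB : krausMap V B = B)
    (hBB : krausMap V (star B * B) = star B * B) (k : ι) : Commute B (V k) := by
  have hsum := sum_star_commutator_mul_commutator V B
  rw [hV, krausMap_star, hB, hBB, mul_one, sub_self, zero_sub, neg_add_cancel] at hsum
  exact sub_eq_zero.mp (sum_conjTranspose_mul_self_eq_zero_iff.mp hsum k (Finset.mem_univ k))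

end Matrix

open scoped ComplexOrder

theorem stmt_0 {n m : ℕ} (V : Fin m → Matrix (Fin n) (Fin n) ℂ)
    (hV : ∑ k, (V k)ᴴ * V k = 1)
    (A : Matrix (Fin n) (Fin n) ℂ)
    (hA : ∑ k, (V k)ᴴ * A * V k = A)
    (hAA : ∑ k, (V k)ᴴ * (Aᴴ * A) * V k = Aᴴ * A)
    (hAA' : ∑ k, (V k)ᴴ * (A * Aᴴ) * V k = A * Aᴴ) :
    ∀ k, A * V k = V k * A ∧ A * (V k)ᴴ = (V k)ᴴ * A := by
  have hV₁ : krausMap V 1 = 1 := by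
    simpa only [krausMap, mul_one, star_eq_conjTranspose] using hV
  change krausMap V A = A at hA
  change krausMap V (star A * A) = star A * A at hAA
  have hA_star : krausMap V (star A) = star A := by rw [krausMap_star, hA]
  have hAA_star : krausMap V (star (star A) * star A) = star (star A) * star A := by
    rw [star_star]; exact hAA'
  intro k
  have hcomm_star := (commute_of_krausMap_eq_self hV₁ hA_star hAA_star k).star_star
  rw [star_star] at hcomm_star
  exact ⟨(commute_of_krausMap_eq_self hV₁ hA hAA k).eq, hcomm_star.eq⟩
end

section
/- Let Φ be a positive unital linear map on n×n matrices satisfying the Schwarz inequality Φ(X*X) ≥ Φ(X)*Φ(X), and suppose ρ is a positive definite matrix with trace(ρ Φ(X)) = trace(ρ X) for all X (a faithful invariant state). If X satisfies Φ²(X*X) = Φ²(X)*Φ²(X), then Φ(X*X) = Φ(X)*Φ(X). In particular, the multiplicative domain of Φ² is contained in that of Φ. -/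
open Matrix
open scoped ComplexOrder

lemma psd_trace_aux {m : ℕ} {M : Matrix (Fin m) (Fin m) ℂ} (hM : M.PosSemidef)
    (h : M.trace = 0) : M = 0 := by
  obtain ⟨B, rfl⟩ : ∃ B : Matrix (Fin m) (Fin m) ℂ, M = Bᴴ * B := by
    open scoped MatrixOrder Matrix.Norms.L2Operator in
    exact CStarAlgebra.nonneg_iff_eq_star_mul_self.mp hM.nonneg
  suffices hB : B = 0 by simp [hB]
  have h' : ∑ j, ∑ i, Complex.normSq (B i j) = 0 := by
    have h2 : (↑(∑ j, ∑ i, Complex.normSq (B i j)) : ℂ) = 0 := by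
      rw [← h]
      push_cast
      simp [Matrix.trace, Matrix.diag, Matrix.mul_apply, Matrix.conjTranspose_apply,
        Complex.normSq_eq_conj_mul_self]
    exact_mod_cast h2
  ext i j
  have := (Finset.sum_eq_zero_iff_of_nonneg (fun j _ => Finset.sum_nonneg
    (fun i _ => Complex.normSq_nonneg (B i j)))).mp h' j (Finset.mem_univ j)
  have := (Finset.sum_eq_zero_iff_of_nonneg
    (fun i _ => Complex.normSq_nonneg (B i j))).mp this i (Finset.mem_univ i)
  simpa using Complex.normSq_eq_zero.mp this

lemma psd_trace_nonneg {m : ℕ} {M : Matrix (Fin m) (Fin m) ℂ} (hM : M.PosSemidef) :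
    ∃ s : ℝ, 0 ≤ s ∧ M.trace = (s : ℂ) := by
  obtain ⟨B, rfl⟩ : ∃ B : Matrix (Fin m) (Fin m) ℂ, M = Bᴴ * B := by
    open scoped MatrixOrder Matrix.Norms.L2Operator in
    exact CStarAlgebra.nonneg_iff_eq_star_mul_self.mp hM.nonneg
  refine ⟨∑ j, ∑ i, Complex.normSq (B i j),
    Finset.sum_nonneg (fun j _ => Finset.sum_nonneg (fun i _ => Complex.normSq_nonneg _)), ?_⟩
  push_cast
  simp [Matrix.trace, Matrix.diag, Matrix.mul_apply, Matrix.conjTranspose_apply,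
    Complex.normSq_eq_conj_mul_self]

lemma psd_sum_zero {m : ℕ} {A B : Matrix (Fin m) (Fin m) ℂ} (hA : A.PosSemidef)
    (hB : B.PosSemidef) (h : A + B = 0) : A = 0 := by
  obtain ⟨a, ha, hta⟩ := psd_trace_nonneg hA
  obtain ⟨b, hb, htb⟩ := psd_trace_nonneg hB
  have : A.trace + B.trace = 0 := by rw [← Matrix.trace_add, h, Matrix.trace_zero]
  rw [hta, htb] at this
  have hab : a + b = 0 := by exact_mod_cast this
  have ha0 : a = 0 := le_antisymm (by linarith) ha
  exact psd_trace_aux hA (by rw [hta, ha0]; norm_num)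

theorem stmt_5 {n : ℕ} (Φ : Matrix (Fin n) (Fin n) ℂ →ₗ[ℂ] Matrix (Fin n) (Fin n) ℂ)
    (hunital : Φ 1 = 1)
    (hSchwarz : ∀ X, (Φ (Xᴴ * X) - (Φ X)ᴴ * (Φ X)).PosSemidef)
    (hpos : ∀ X : Matrix (Fin n) (Fin n) ℂ, X.PosSemidef → (Φ X).PosSemidef)
    (ρ : Matrix (Fin n) (Fin n) ℂ) (hρ : ρ.PosDef)
    (hinv : ∀ X, (ρ * Φ X).trace = (ρ * X).trace)
    (X : Matrix (Fin n) (Fin n) ℂ)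
    (h2 : Φ (Φ (Xᴴ * X)) = (Φ (Φ X))ᴴ * (Φ (Φ X))) :
    Φ (Xᴴ * X) = (Φ X)ᴴ * (Φ X) := by
  set D := Φ (Xᴴ * X) - (Φ X)ᴴ * (Φ X) with hDdef
  have hD : D.PosSemidef := hSchwarz X
  have hΦD : (Φ D).PosSemidef := hpos D hD
  have hS2 : (Φ ((Φ X)ᴴ * (Φ X)) - (Φ (Φ X))ᴴ * (Φ (Φ X))).PosSemidef := hSchwarz (Φ X)
  have hsum : Φ D + (Φ ((Φ X)ᴴ * (Φ X)) - (Φ (Φ X))ᴴ * (Φ (Φ X))) = 0 := by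
    rw [hDdef, map_sub]
    rw [h2]
    abel
  have hΦD0 : Φ D = 0 := psd_sum_zero hΦD hS2 hsum
  have htr : (ρ * D).trace = 0 := by
    rw [← hinv D, hΦD0, Matrix.mul_zero, Matrix.trace_zero]
  -- use sqrt of ρ
  open scoped MatrixOrder in
  set S := CFC.sqrt ρ with hSdef
  open scoped MatrixOrder in
  have hSS : S * S = ρ := CFC.sqrt_mul_sqrt_self ρ hρ.posSemidef.nonneg
  open scoped MatrixOrder in
  have hSH : Sᴴ = S := (CFC.sqrt_nonneg ρ).posSemidef.1
  have hSDS : (S * D * S).PosSemidef := by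
    have := hD.mul_mul_conjTranspose_same S
    rwa [hSH] at this
  have htr2 : (S * D * S).trace = 0 := by
    rw [Matrix.trace_mul_cycle, hSS, htr]
  have hzero : S * D * S = 0 := psd_trace_aux hSDS htr2
  have hdet : IsUnit S.det := by
    have : S.det * S.det = ρ.det := by rw [← Matrix.det_mul, hSS]
    have hρdet : ρ.det ≠ 0 := hρ.det_pos.ne'
    have : S.det ≠ 0 := fun h => hρdet (by rw [← this, h, mul_zero])
    exact this.isUnit
  have hD0 : D = 0 := by
    have h1 : S⁻¹ * (S * D * S) * S⁻¹ = D := by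
      rw [show S⁻¹ * (S * D * S) * S⁻¹ = (S⁻¹ * S) * D * (S * S⁻¹) by noncomm_ring,
        Matrix.nonsing_inv_mul _ hdet, Matrix.mul_nonsing_inv _ hdet, Matrix.one_mul,
        Matrix.mul_one]
    rw [← h1, hzero, Matrix.mul_zero, Matrix.zero_mul]
  have := sub_eq_zero.mp (hDdef ▸ hD0)
  exact this
end

section
/- Let Φ be a unital Schwarz map on n×n matrices with a faithful invariant state ρ. If U is a unitary matrix with Φ(U) = λU for some λ on the unit circle, then Φ(U*U) = Φ(U)*Φ(U), i.e. peripheral unitary eigenvectors lie in the multiplicative domain. -/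
/-!
The Schwarz defect `Φ (Uᴴ * U) - (Φ U)ᴴ * Φ U` is positive semidefinite. Since `|λ| = 1`,
`(Φ U)ᴴ * Φ U = Uᴴ * U`, so invariance of `ρ` makes `Tr (ρ * defect) = 0`; a positive
semidefinite matrix that is orthogonal to a positive definite one in the trace pairing vanishes.
-/

open Matrix
open scoped ComplexOrder

namespace Matrix

open scoped MatrixOrder in
theorem PosSemidef.eq_zero_of_trace_mul_eq_zero {𝕜 n : Type*} [RCLike 𝕜] [Fintype n]
    [DecidableEq n] {ρ D : Matrix n n 𝕜} (hD : D.PosSemidef) (hρ : ρ.PosDef)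
    (h : (ρ * D).trace = 0) : D = 0 := by
  set S := CFC.sqrt ρ
  set T := CFC.sqrt D
  have hS : Sᴴ = S := (CFC.sqrt_nonneg ρ).isSelfAdjoint.star_eq
  have hT : Tᴴ = T := (CFC.sqrt_nonneg D).isSelfAdjoint.star_eq
  have hρS : S * S = ρ := CFC.sqrt_mul_sqrt_self ρ hρ.posSemidef.nonneg
  have hDT : T * T = D := CFC.sqrt_mul_sqrt_self D hD.nonneg
  -- `Tr (ρ D) = Tr (S S T T) = Tr (T S S T) = Tr ((S T)ᴴ (S T))`
  have hST : S * T = 0 := by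
    rw [← trace_conjTranspose_mul_self_eq_zero_iff, conjTranspose_mul, hS, hT, ← h, ← hρS, ← hDT]
    simp only [Matrix.mul_assoc]
    rw [trace_mul_comm T]
    simp only [Matrix.mul_assoc]
  have hSunit : IsUnit S := (CFC.isUnit_sqrt_iff ρ hρ.posSemidef.nonneg).mpr hρ.isUnit
  rw [← hDT, hSunit.mul_right_eq_zero.mp hST, Matrix.zero_mul]

theorem conjTranspose_smul_mul_smul_of_norm_eq_one {𝕜 m n : Type*} [RCLike 𝕜] [Fintype m]
    {c : 𝕜} (hc : ‖c‖ = 1) (A : Matrix m n 𝕜) : (c • A)ᴴ * (c • A) = Aᴴ * A := by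
  have hc' : star c * c = 1 := by
    rw [RCLike.star_def, RCLike.conj_mul, hc, RCLike.ofReal_one, one_pow]
  rw [conjTranspose_smul, smul_mul, Matrix.mul_smul, smul_smul, hc', one_smul]

end Matrix

theorem stmt_6_general {n : ℕ} (Φ : Matrix (Fin n) (Fin n) ℂ →ₗ[ℂ] Matrix (Fin n) (Fin n) ℂ)
    (hSchwarz : ∀ X, (Φ (Xᴴ * X) - (Φ X)ᴴ * (Φ X)).PosSemidef)
    (ρ : Matrix (Fin n) (Fin n) ℂ) (hρ : ρ.PosDef)
    (hinv : ∀ X, (ρ * Φ X).trace = (ρ * X).trace)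
    (U : Matrix (Fin n) (Fin n) ℂ) (lam : ℂ) (hlam : ‖lam‖ = 1)
    (hU : Φ U = lam • U) :
    Φ (Uᴴ * U) = (Φ U)ᴴ * (Φ U) := by
  have hmul : (Φ U)ᴴ * Φ U = Uᴴ * U := by
    rw [hU, conjTranspose_smul_mul_smul_of_norm_eq_one hlam]
  have htrace : (ρ * (Φ (Uᴴ * U) - (Φ U)ᴴ * Φ U)).trace = 0 := by
    rw [Matrix.mul_sub, trace_sub, hinv, hmul, sub_self]
  exact sub_eq_zero.mp ((hSchwarz U).eq_zero_of_trace_mul_eq_zero hρ htrace)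

theorem stmt_6 {n : ℕ} (Φ : Matrix (Fin n) (Fin n) ℂ →ₗ[ℂ] Matrix (Fin n) (Fin n) ℂ)
    (hunital : Φ 1 = 1)
    (hSchwarz : ∀ X, (Φ (Xᴴ * X) - (Φ X)ᴴ * (Φ X)).PosSemidef)
    (ρ : Matrix (Fin n) (Fin n) ℂ) (hρ : ρ.PosDef)
    (hinv : ∀ X, (ρ * Φ X).trace = (ρ * X).trace)
    (U : Matrix (Fin n) (Fin n) ℂ) (lam : ℂ) (hlam : ‖lam‖ = 1)
    (hU : Φ U = lam • U) :
    Φ (Uᴴ * U) = (Φ U)ᴴ * (Φ U) :=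
  stmt_6_general Φ hSchwarz ρ hρ hinv U lam hlam hU
end

section
/- Let Φ be an irreducible unital positive map on n×n matrices, in the sense that its only fixed points are scalar multiples of the identity, and suppose Q_0,…,Q_{d-1} are projections summing to I with Φ(Q_j) = Q_{j-1 mod d}. If l divides both m and d with l = gcd(m,d) > 1, then the fixed point space of Φ^m contains a non-scalar element; explicitly, with d = kl, the projection P = Q_0 + Q_l + ⋯ + Q_{(k-1)l} satisfies Φ^m(P) = P and P is neither 0 nor I. -/
open Matrix Finset

lemma zmod_sum_range' {M : Type*} [AddCommMonoid M] {k : ℕ} [NeZero k]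
    (f : ℕ → M) : ∑ i ∈ Finset.range k, f i = ∑ i : ZMod k, f i.val := by
  refine Finset.sum_nbij' (i := fun b => (b : ZMod k)) (j := fun a => a.val) ?_ ?_ ?_ ?_ ?_ <;>
    intro a ha <;> simp_all [ZMod.val_lt, ZMod.val_cast_of_lt, Finset.mem_range, Nat.mod_eq_of_lt]

theorem stmt_10 {n d : ℕ} [NeZero d]
    (Φ : Matrix (Fin n) (Fin n) ℂ →ₗ[ℂ] Matrix (Fin n) (Fin n) ℂ)
    (hunital : Φ 1 = 1)
    (hirr : ∀ A, Φ A = A → ∃ c : ℂ, A = c • 1)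
    (Q : ZMod d → Matrix (Fin n) (Fin n) ℂ)
    (hne : ∀ j, Q j ≠ 0)
    (hproj : ∀ j, Q j * Q j = Q j)
    (horth : ∀ i j, i ≠ j → Q i * Q j = 0)
    (hsum : ∑ j, Q j = 1)
    (hcyc : ∀ j, Φ (Q j) = Q (j - 1))
    (m k l : ℕ) (hl : l = Nat.gcd m d) (hl1 : 1 < l) (hd : d = k * l) :
    (Φ ^ m) (∑ i ∈ Finset.range k, Q ((i * l : ℕ) : ZMod d))
        = ∑ i ∈ Finset.range k, Q ((i * l : ℕ) : ZMod d) ∧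
    (∑ i ∈ Finset.range k, Q ((i * l : ℕ) : ZMod d)) ≠ 0 ∧
    (∑ i ∈ Finset.range k, Q ((i * l : ℕ) : ZMod d)) ≠ 1 := by
  have hd0 : d ≠ 0 := NeZero.ne d
  have hk0 : k ≠ 0 := by rintro rfl; simp at hd; omega
  haveI : NeZero k := ⟨hk0⟩
  have hl0 : l ≠ 0 := by omega
  obtain ⟨c, hc⟩ : l ∣ m := hl ▸ Nat.gcd_dvd_left m d
  -- cast lemma
  have castA : ∀ a : ℕ, (((a : ZMod k).val * l : ℕ) : ZMod d) = ((a * l : ℕ) : ZMod d) := by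
    intro a
    rw [ZMod.val_natCast]
    have h1 : a * l = a % k * l + d * (a / k) := by
      conv_lhs => rw [← Nat.div_add_mod a k]
      rw [hd]; ring
    rw [h1]
    push_cast
    simp [ZMod.natCast_self]
  -- iterate lemma
  have hiter : ∀ (t : ℕ) (j : ZMod d), (Φ ^ t) (Q j) = Q (j - t) := by
    intro t
    induction t with
    | zero => intro j; simp
    | succ t ih =>
      intro j
      rw [pow_succ, Module.End.mul_apply, hcyc, ih]
      congr 1
      push_cast
      ring
  -- part 1
  have part1 : (Φ ^ m) (∑ i ∈ Finset.range k, Q ((i * l : ℕ) : ZMod d))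
      = ∑ i ∈ Finset.range k, Q ((i * l : ℕ) : ZMod d) := by
    rw [map_sum]
    simp_rw [hiter m]
    rw [zmod_sum_range' (fun i => Q (((i * l : ℕ) : ZMod d) - m)),
        zmod_sum_range' (fun i => Q ((i * l : ℕ) : ZMod d))]
    rw [← Equiv.sum_comp (Equiv.addRight (c : ZMod k))
      (fun i : ZMod k => Q (((i.val * l : ℕ) : ZMod d) - m))]
    apply Finset.sum_congr rfl
    intro i _
    simp only [Equiv.coe_addRight]
    congr 1
    have : (i + (c : ZMod k)) = ((i.val + c : ℕ) : ZMod k) := by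
      push_cast [ZMod.natCast_val, ZMod.cast_id]; ring
    rw [this, castA]
    have : ((i.val + c) * l : ℕ) = i.val * l + m := by rw [hc]; ring
    rw [this]
    push_cast
    ring
  refine ⟨part1, ?_, ?_⟩
  · -- P ≠ 0 : multiply by Q 0
    intro h0
    have hQ0 : Q 0 * (∑ i ∈ Finset.range k, Q ((i * l : ℕ) : ZMod d)) = Q 0 := by
      rw [Finset.mul_sum]
      rw [Finset.sum_eq_single 0]
      · simp [hproj 0]
      · intro b hb hb0
        apply horth
        intro hEq
        have hbl : b * l < d := by
          rw [hd]; exact (Nat.mul_lt_mul_right (by omega : 0 < l)).mpr (Finset.mem_range.mp hb)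
        have : ((b * l : ℕ) : ZMod d) = ((0 : ℕ) : ZMod d) := by simpa using hEq.symm
        have := (ZMod.natCast_eq_natCast_iff' _ _ _).mp this
        simp [Nat.mod_eq_of_lt hbl, Nat.mod_eq_of_lt (by omega : 0 < d)] at this
        exact hb0 (by omega)
      · intro h; exact absurd (Finset.mem_range.mpr (by omega)) h
    rw [h0, mul_zero] at hQ0
    exact hne 0 hQ0.symm
  · -- P ≠ 1 : multiply by Q 1
    intro h1
    have hd1 : 1 < d := by
      rw [hd]; calc 1 < l := hl1
        _ ≤ k * l := Nat.le_mul_of_pos_left l (by omega)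
    have hQ1 : Q 1 * (∑ i ∈ Finset.range k, Q ((i * l : ℕ) : ZMod d)) = 0 := by
      rw [Finset.mul_sum]
      apply Finset.sum_eq_zero
      intro b hb
      apply horth
      intro hEq
      have hbl : b * l < d := by
        rw [hd]; exact (Nat.mul_lt_mul_right (by omega : 0 < l)).mpr (Finset.mem_range.mp hb)
      have : ((1 : ℕ) : ZMod d) = ((b * l : ℕ) : ZMod d) := by simpa using hEq
      have := (ZMod.natCast_eq_natCast_iff' _ _ _).mp this
      rw [Nat.mod_eq_of_lt hbl, Nat.mod_eq_of_lt hd1] at this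
      rcases Nat.eq_zero_or_pos b with rfl | hb0
      · omega
      · have : l ≤ b * l := Nat.le_mul_of_pos_left l hb0
        omega
    rw [h1, mul_one] at hQ1
    exact hne 1 hQ1
end

section
/- For the cyclic shift channel Φ of the previous context, with Ũ_i := U_i⋯U_1 (Ũ_0 := 1) and Ũ := U_0 Ũ_{d−1}, the fixed points of Φ are exactly the families A_i = Ũ_i A_0 Ũ_i* where A_0 commutes with Ũ. In particular the map A_0 ↦ (Ũ_i A_0 Ũ_i*)_i is a bijection from the commutant of Ũ onto the fixed point set of Φ. -/
open Matrix

/-- `Ut U i = U i * U (i-1) * ⋯ * U 1`, with `Ut U 0 = 1`. -/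
noncomputable def Ut {n d : ℕ} [NeZero d]
    (U : ZMod d → Matrix (Fin n) (Fin n) ℂ) : ℕ → Matrix (Fin n) (Fin n) ℂ
  | 0 => 1
  | (i + 1) => U ((i + 1 : ℕ) : ZMod d) * Ut U i

/-!
A fixed point of `Φ` satisfies `A (j + 1) = U (j + 1) * A j * (U (j + 1))ᴴ`, so it is determined
by `A 0` through `A k = Ut U k * A 0 * (Ut U k)ᴴ` for every `k : ℕ`. Going once around the cycle,
`Ut U d = U 0 * Ut U (d - 1)` is `Ũ`, and consistency at `k = d` says exactly that `A 0` commutes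
with `Ũ`. Conversely, commutation with `Ũ` makes `k ↦ Ut U k * A₀ * (Ut U k)ᴴ` `d`-periodic
(because `Ut U (k + d) = Ut U k * Ũ`), so it descends to a family indexed by `ZMod d`.
-/

theorem star_mul_mul_eq_iff_eq_mul_mul_star {R : Type*} [Monoid R] [StarMul R] {u : R}
    (hu : u ∈ unitary R) {a b : R} : star u * a * u = b ↔ a = u * b * star u := by
  have h₁ := Unitary.star_mul_self_of_mem hu
  have h₂ := Unitary.mul_star_self_of_mem hu
  constructor <;> rintro rfl
  · simp only [← mul_assoc, h₂, one_mul]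
    simp only [mul_assoc, h₂, mul_one]
  · simp only [← mul_assoc, h₁, one_mul]
    simp only [mul_assoc, h₁, mul_one]

theorem fixed_iff_forall_step {ι R : Type*} [Add ι] [One ι] [Monoid R] [StarMul R] {u : ι → R}
    (hu : ∀ i, u i ∈ unitary R) (A : ι → R) :
    (fun j => star (u (j + 1)) * A (j + 1) * u (j + 1)) = A ↔
      ∀ j, A (j + 1) = u (j + 1) * A j * star (u (j + 1)) :=
  funext_iff.trans <| forall_congr' fun _ => star_mul_mul_eq_iff_eq_mul_mul_star (hu _)

section Ut

variable {n d : ℕ} [NeZero d] (U : ZMod d → Matrix (Fin n) (Fin n) ℂ)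

theorem Ut_mem_unitary (hU : ∀ i, U i ∈ unitary (Matrix (Fin n) (Fin n) ℂ)) (k : ℕ) :
    Ut U k ∈ unitary (Matrix (Fin n) (Fin n) ℂ) := by
  induction k with
  | zero => exact one_mem _
  | succ k ih => exact mul_mem (hU _) ih

theorem Ut_self : Ut U d = U 0 * Ut U (d - 1) := by
  obtain ⟨m, hm⟩ := Nat.exists_eq_succ_of_ne_zero (NeZero.ne d)
  subst hm
  simp only [Ut, Nat.succ_sub_one, ZMod.natCast_self]

theorem Ut_add_self (k : ℕ) : Ut U (k + d) = Ut U k * Ut U d := by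
  induction k with
  | zero => simp [Ut]
  | succ k ih =>
    have hcast : ((k + d + 1 : ℕ) : ZMod d) = ((k + 1 : ℕ) : ZMod d) := by simp
    rw [Nat.add_right_comm, Ut, ih, hcast, Ut, mul_assoc]

theorem periodic_Ut_conj (hU : ∀ i, U i ∈ unitary (Matrix (Fin n) (Fin n) ℂ))
    {A₀ : Matrix (Fin n) (Fin n) ℂ} (hA₀ : Commute A₀ (Ut U d)) :
    Function.Periodic (fun k => Ut U k * A₀ * (Ut U k)ᴴ) d := by
  intro k
  have hconj := (commute_unitary_iff_star_right_conjugate (Ut_mem_unitary U hU d)).mp hA₀.symm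
  simp only [Ut_add_self, ← star_eq_conjTranspose]
  conv_rhs => rw [← hconj]
  simp only [star_mul, mul_assoc]

theorem forall_step_iff_eq_Ut_conj (A : ZMod d → Matrix (Fin n) (Fin n) ℂ) :
    (∀ j, A (j + 1) = U (j + 1) * A j * (U (j + 1))ᴴ) ↔
      ∀ k : ℕ, A k = Ut U k * A 0 * (Ut U k)ᴴ := by
  constructor
  · intro h k
    induction k with
    | zero => simp [Ut]
    | succ k ih =>
      rw [Nat.cast_succ, h, ih, Ut, Nat.cast_succ, conjTranspose_mul]
      simp only [mul_assoc]
  · intro h j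
    obtain ⟨k, rfl⟩ : ∃ k : ℕ, (k : ZMod d) = j := ⟨j.val, ZMod.natCast_zmod_val j⟩
    rw [← Nat.cast_succ, h (k + 1), h k, Ut, conjTranspose_mul]
    simp only [mul_assoc]

theorem forall_eq_Ut_conj_iff (hU : ∀ i, U i ∈ unitary (Matrix (Fin n) (Fin n) ℂ))
    (A : ZMod d → Matrix (Fin n) (Fin n) ℂ) :
    (∀ k : ℕ, A k = Ut U k * A 0 * (Ut U k)ᴴ) ↔
      ∃ A₀, Commute A₀ (U 0 * Ut U (d - 1)) ∧
        ∀ i : ZMod d, A i = Ut U i.val * A₀ * (Ut U i.val)ᴴ := by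
  rw [← Ut_self]
  constructor
  · intro h
    refine ⟨A 0, ?_, fun i => by simpa using h i.val⟩
    have hd := h d
    rw [ZMod.natCast_self] at hd
    exact ((commute_unitary_iff_star_right_conjugate (Ut_mem_unitary U hU d)).mpr hd.symm).symm
  · rintro ⟨A₀, hcomm, hA⟩ k
    have hA0 : A 0 = A₀ := by simpa [Ut] using hA 0
    rw [hA0, ← (periodic_Ut_conj U hU hcomm).map_mod_nat k, hA k, ZMod.val_natCast]

end Ut

theorem stmt_15 {n d : ℕ} [NeZero d]
    (U : ZMod d → Matrix (Fin n) (Fin n) ℂ)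
    (hU : ∀ i, (U i)ᴴ * U i = 1 ∧ U i * (U i)ᴴ = 1)
    (A : ZMod d → Matrix (Fin n) (Fin n) ℂ) :
    (fun j => (U (j + 1))ᴴ * A (j + 1) * U (j + 1)) = A ↔
      ∃ A₀ : Matrix (Fin n) (Fin n) ℂ,
        A₀ * (U 0 * Ut U (d - 1)) = (U 0 * Ut U (d - 1)) * A₀ ∧
        ∀ i : ZMod d, A i = Ut U i.val * A₀ * (Ut U i.val)ᴴ := by
  have hU' : ∀ i, U i ∈ unitary (Matrix (Fin n) (Fin n) ℂ) := fun i =>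
    Unitary.mem_iff.mpr (hU i)
  exact (fixed_iff_forall_step hU' A).trans <|
    (forall_step_iff_eq_Ut_conj U A).trans (forall_eq_Ut_conj_iff U hU' A)
end

section
/- Let E be a linear map on n×n complex matrices that is idempotent (E∘E = E), unital, positive, and faithful (E(A) = 0 and A PSD imply A = 0), and satisfies the conditional expectation (bimodule) property E(E(A)·B·E(C)) = E(A)·E(B)·E(C). If X satisfies E(X*X) = E(X)*E(X), then X = E(X), i.e. X lies in the range of E. -/
/-!
A positive map on matrices commutes with `ᴴ`, so with the bimodule property and `E 1 = 1` each of
the cross terms of `E ((X - E X)ᴴ (X - E X))` equals `(E X)ᴴ (E X)`. Hence the hypothesis says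
that `E` kills the positive semidefinite matrix `(X - E X)ᴴ (X - E X)`, and faithfulness gives
`X = E X`.
-/

open Matrix
open scoped ComplexOrder

theorem Matrix.map_conjTranspose_of_posSemidef {n : Type*} [Fintype n]
    (E : Matrix n n ℂ →ₗ[ℂ] Matrix n n ℂ)
    (hpos : ∀ X : Matrix n n ℂ, X.PosSemidef → (E X).PosSemidef) (A : Matrix n n ℂ) :
    E Aᴴ = (E A)ᴴ := by
  classical
  -- Mathlib's `StarHomClass` instance for positive `ℂ`-linear maps: self-adjoint matrices are
  -- differences of positive semidefinite ones.
  open scoped MatrixOrder in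
  exact map_star (PositiveLinearMap.mk₀ E fun X hX ↦
    nonneg_iff_posSemidef.mpr (hpos X (nonneg_iff_posSemidef.mp hX))) A

section ConditionalExpectation

variable {A F : Type*} [Ring A] [StarRing A] [FunLike F A A] (E : F)

theorem map_star_mul_map_of_bimodule (hunital : E 1 = 1)
    (hbimod : ∀ a b c, E (E a * b * E c) = E a * E b * E c)
    (hstar : ∀ a, E (star a) = star (E a)) (x : A) :
    E (star x * E x) = star (E x) * E x ∧ E (star (E x) * x) = star (E x) * E x ∧
      E (star (E x) * E x) = star (E x) * E x := by
  refine ⟨?_, ?_, ?_⟩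
  · simpa [hunital, hstar] using hbimod 1 (star x) x
  · simpa [hunital, hstar] using hbimod (star x) x 1
  · simpa [hunital, hstar] using hbimod (star x) 1 x

theorem map_star_sub_mul_sub_of_bimodule [AddMonoidHomClass F A A] (hunital : E 1 = 1)
    (hbimod : ∀ a b c, E (E a * b * E c) = E a * E b * E c)
    (hstar : ∀ a, E (star a) = star (E a)) (x : A) :
    E (star (x - E x) * (x - E x)) = E (star x * x) - star (E x) * E x := by
  obtain ⟨h₁, h₂, h₃⟩ := map_star_mul_map_of_bimodule E hunital hbimod hstar x
  have hexpand : star (x - E x) * (x - E x) =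
      star x * x - star x * E x - (star (E x) * x - star (E x) * E x) := by
    simp only [star_sub, sub_mul, mul_sub]
    abel
  rw [hexpand, map_sub, map_sub, map_sub, h₁, h₂, h₃, sub_self, sub_zero]

end ConditionalExpectation

theorem stmt_18_general {n : ℕ}
    (E : Matrix (Fin n) (Fin n) ℂ →ₗ[ℂ] Matrix (Fin n) (Fin n) ℂ)
    (hunital : E 1 = 1)
    (hbimod : ∀ A B C, E (E A * B * E C) = E A * E B * E C)
    (hpos : ∀ X : Matrix (Fin n) (Fin n) ℂ, X.PosSemidef → (E X).PosSemidef)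
    (hfaithful : ∀ X : Matrix (Fin n) (Fin n) ℂ, X.PosSemidef → E X = 0 → X = 0)
    (X : Matrix (Fin n) (Fin n) ℂ)
    (hX : E (Xᴴ * X) = (E X)ᴴ * (E X)) :
    X = E X := by
  have hkill : E ((X - E X)ᴴ * (X - E X)) = 0 := by
    rw [← star_eq_conjTranspose, map_star_sub_mul_sub_of_bimodule E hunital hbimod
      (map_conjTranspose_of_posSemidef E hpos), star_eq_conjTranspose, hX, star_eq_conjTranspose,
      sub_self]
  have hzero := hfaithful _ (posSemidef_conjTranspose_mul_self _) hkill
  exact sub_eq_zero.mp (conjTranspose_mul_self_eq_zero.mp hzero)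

theorem stmt_18 {n : ℕ}
    (E : Matrix (Fin n) (Fin n) ℂ →ₗ[ℂ] Matrix (Fin n) (Fin n) ℂ)
    (hunital : E 1 = 1)
    (hbimod : ∀ A B C, E (E A * B * E C) = E A * E B * E C)
    (hpos : ∀ X : Matrix (Fin n) (Fin n) ℂ, X.PosSemidef → (E X).PosSemidef)
    (hfaithful : ∀ X : Matrix (Fin n) (Fin n) ℂ, X.PosSemidef → E X = 0 → X = 0)
    (hidem : ∀ X, E (E X) = E X)
    (X : Matrix (Fin n) (Fin n) ℂ)
    (hX : E (Xᴴ * X) = (E X)ᴴ * (E X)) :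
    X = E X :=
  stmt_18_general E hunital hbimod hpos hfaithful X hX
end
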